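/- The rule-based drastic inconsistency measure I^RB_d does not satisfy Rule Emphasis: there exists a rule base B and a rule r = (B'→H) not in B and not free in B ∪ {r} such that I^RB_d(B ∪ {r}) is not strictly greater than I^RB_d(B ∪ {H}). -/

import Mathlib

open scoped Classical

/-- A rule over atoms `A`: literals are pairs (atom, sign). -/
structure Rule (A : Type*) where
  body : Finset (A × Bool)
  head : A × Bool
deriving DecidableEq

abbrev RuleBase (A : Type*) := Finset (Rule A)

variable {A : Type*}

/-- The complement of a literal. -/
def litCompl (l : A × Bool) : A × Bool := (l.1, !l.2)

/-- The fact with head `l` (empty body). -/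
def factR (l : A × Bool) : Rule A := ⟨∅, l⟩

/-- The facts (empty-body rules) of a rule base. -/
noncomputable def facts [DecidableEq A] (B : RuleBase A) : RuleBase A :=
  B.filter (fun r => r.body = ∅)

/-- The proper (non-fact) rules of a rule base. -/
noncomputable def properRules [DecidableEq A] (B : RuleBase A) : RuleBase A :=
  B.filter (fun r => r.body ≠ ∅)

/-- A set of literals is closed w.r.t. a rule base. -/
def Closed (B : RuleBase A) (M : Set (A × Bool)) : Prop :=
  ∀ r ∈ B, (↑r.body ⊆ M) → r.head ∈ M

/-- The minimal model: the smallest closed set of literals. -/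
def minModel (B : RuleBase A) : Set (A × Bool) :=
  {l | ∀ M : Set (A × Bool), Closed B M → l ∈ M}

/-- A set of literals is consistent if it contains no complementary pair. -/
def ConsistentLits (M : Set (A × Bool)) : Prop :=
  ¬ ∃ a : A, (a, true) ∈ M ∧ (a, false) ∈ M

/-- A rule base is consistent if its minimal model is consistent. -/
def Consistent (B : RuleBase A) : Prop := ConsistentLits (minModel B)

/-- The minimal inconsistent subsets of a rule base. -/
def MI (B : RuleBase A) : Set (RuleBase A) :=
  { M | M ⊆ B ∧ ¬ Consistent M ∧ ∀ M' ⊂ M, Consistent M' }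

/-- `M` contains a complementary pair of facts. -/
def hasComplFactPair (M : RuleBase A) : Prop :=
  ∃ a : A, factR (a, true) ∈ M ∧ factR (a, false) ∈ M

/-- Minimal inconsistent subsets containing no complementary pair of facts. -/
def MIF (B : RuleBase A) : Set (RuleBase A) :=
  { M ∈ MI B | ¬ hasComplFactPair M }

/-- A formula is free in a rule base if it belongs to no minimal inconsistent subset. -/
def Free (r : Rule A) (B : RuleBase A) : Prop := ∀ M ∈ MI B, r ∉ M

/-- Rule consistency: the rules together with any consistent set of facts are consistent. -/
def RuleConsistent [DecidableEq A] (B : RuleBase A) : Prop :=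
  ∀ F' ⊆ facts B, Consistent F' → Consistent (properRules B ∪ F')

/-- The drastic inconsistency measure. -/
noncomputable def Idr (B : RuleBase A) : ℕ := if Consistent B then 0 else 1

/-- The rule-based drastic inconsistency measure. -/
noncomputable def IRBd (B : RuleBase A) : ℕ := if MIF B = ∅ then 0 else 1

/-- The rule-based MI-inconsistency measure. -/
noncomputable def IRBMI (B : RuleBase A) : ℕ := (MIF B).ncard

/-- The rule-based problematic inconsistency measure: number of distinct
    non-fact rules occurring in some element of `MIF B`. -/
noncomputable def IRBp (B : RuleBase A) : ℕ :=
  {r : Rule A | r.body ≠ ∅ ∧ ∃ M ∈ MIF B, r ∈ M}.ncard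

/-- Three truth values. -/
inductive TV | t | b | f
deriving DecidableEq

def TV.negv : TV → TV
  | .t => .f
  | .f => .t
  | .b => .b

/-- Value of a literal under a three-valued interpretation. -/
def litVal (v : A → TV) (l : A × Bool) : TV :=
  if l.2 then v l.1 else (v l.1).negv

/-- Designated truth values. -/
def TV.des : TV → Prop
  | .f => False
  | _ => True

/-- Three-valued satisfaction of a rule. -/
def sat3 (v : A → TV) (r : Rule A) : Prop :=
  (∀ l ∈ r.body, (litVal v l).des) → (litVal v r.head).des

/-- The rule-based contension inconsistency measure. -/
noncomputable def IRBc (B : RuleBase A) : ℕ :=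
  sInf { n : ℕ | ∃ v : A → TV,
    (∀ M ∈ MIF B, ∀ r ∈ M, sat3 v r) ∧ n = {a : A | v a = TV.b}.ncard }

/-- The payoff of `α` in coalition `C` (w.r.t. rule base `B` and measure `I`). -/
noncomputable def CoalPayoff [DecidableEq A] (I : RuleBase A → ℝ) (B : RuleBase A)
    (α : Rule A) (C : RuleBase A) : ℝ :=
  ((Nat.factorial (C.card - 1) * Nat.factorial (B.card - C.card) : ℕ) : ℝ)
    / ((Nat.factorial B.card : ℕ) : ℝ) * (I C - I (C.erase α))

/-- The additional payoff shifted from facts to non-free rules. -/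
noncomputable def AddPayoff [DecidableEq A] (I : RuleBase A → ℝ) (B : RuleBase A)
    (r : Rule A) (C : RuleBase A) : ℝ :=
  if Free r C then 0
  else (∑ f ∈ C.filter (fun x => x.body = ∅), CoalPayoff I B f C)
        / ((C.filter (fun x => x.body ≠ ∅ ∧ ¬ Free x C)).card : ℝ)

/-- The adjusted Shapley inconsistency value. -/
noncomputable def Sstar [DecidableEq A] (I : RuleBase A → ℝ) (B : RuleBase A)
    (α : Rule A) : ℝ :=
  if α.body = ∅ then 0
  else ∑ C ∈ B.powerset, (CoalPayoff I B α C + AddPayoff I B α C)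

/-!
Writing `a`, `b` for the facts `factR (0, true)`, `factR (1, true)`, take `B = {a, b, a → ¬a}` and the rule
`b → ¬b`. A fact together with its self-refuting rule is a minimal inconsistent set containing no
complementary pair of facts. So `{a, a → ¬a}` already gives `I^RB_d(B ∪ {¬b}) = 1`, the
largest value the drastic measure takes, while `{b, b → ¬b}` shows that the new rule is not free.
-/

section SelfRefutingPair

variable {A : Type*}

def selfRefuting (a : A) : Rule A := ⟨{(a, true)}, (a, false)⟩

lemma selfRefuting_ne_factR (a : A) (l : A × Bool) : selfRefuting a ≠ factR l := by
  simp [selfRefuting, factR]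

lemma Closed.mono {B B' : RuleBase A} {M : Set (A × Bool)} (h : Closed B M) (hB : B' ⊆ B) :
    Closed B' M :=
  fun r hr => h r (hB hr)

lemma consistent_of_closed {B : RuleBase A} {M : Set (A × Bool)} (hM : Closed B M)
    (hcons : ConsistentLits M) : Consistent B := by
  rintro ⟨a, hpos, hneg⟩
  exact hcons ⟨a, hpos M hM, hneg M hM⟩

lemma not_consistent_of_factR_of_selfRefuting {B : RuleBase A} {a : A}
    (hfact : factR (a, true) ∈ B) (hrule : selfRefuting a ∈ B) : ¬ Consistent B := by
  have hpos : (a, true) ∈ minModel B := fun M hM => hM _ hfact (by simp [factR])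
  have hneg : (a, false) ∈ minModel B := fun M hM =>
    hM _ hrule (by simpa [selfRefuting] using hpos M hM)
  exact fun hcons => hcons ⟨a, hpos, hneg⟩

lemma consistent_of_subset_selfRefuting {M : RuleBase A} {a : A}
    (hM : M ⊆ {selfRefuting a}) : Consistent M := by
  refine consistent_of_closed (M := ∅) (Closed.mono ?_ hM) (by simp [ConsistentLits])
  intro r hr hbody
  simp only [Finset.mem_singleton] at hr
  subst hr
  simp [selfRefuting] at hbody

lemma consistent_of_subset_factR {M : RuleBase A} {a : A}
    (hM : M ⊆ {factR (a, true)}) : Consistent M := by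
  refine consistent_of_closed (M := {(a, true)}) (Closed.mono ?_ hM) (by simp [ConsistentLits])
  intro r hr _
  simp only [Finset.mem_singleton] at hr
  simp [hr, factR]

lemma pair_mem_MI {B : RuleBase A} {a : A} (hfact : factR (a, true) ∈ B)
    (hrule : selfRefuting a ∈ B) : {factR (a, true), selfRefuting a} ∈ MI B := by
  refine ⟨Finset.insert_subset hfact (Finset.singleton_subset_iff.2 hrule),
    not_consistent_of_factR_of_selfRefuting (a := a) (by simp) (by simp), fun M' hM' => ?_⟩
  obtain ⟨x, hx, hsub⟩ := Finset.ssubset_iff_exists_subset_erase.1 hM'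
  have hne := (selfRefuting_ne_factR a (a, true)).symm
  simp only [Finset.mem_insert, Finset.mem_singleton] at hx
  rcases hx with rfl | rfl
  · rw [Finset.erase_insert (by simpa using hne)] at hsub
    exact consistent_of_subset_selfRefuting hsub
  · rw [Finset.pair_comm, Finset.erase_insert (by simpa using hne.symm)] at hsub
    exact consistent_of_subset_factR hsub

lemma pair_mem_MIF {B : RuleBase A} {a : A} (hfact : factR (a, true) ∈ B)
    (hrule : selfRefuting a ∈ B) : {factR (a, true), selfRefuting a} ∈ MIF B := by
  refine ⟨pair_mem_MI hfact hrule, ?_⟩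
  rintro ⟨b, -, hneg⟩
  simp only [Finset.mem_insert, Finset.mem_singleton] at hneg
  rcases hneg with h | h
  · simp [factR] at h
  · exact selfRefuting_ne_factR a _ h.symm

lemma IRBd_le_one (B : RuleBase A) : IRBd B ≤ 1 := by
  unfold IRBd
  split <;> omega

lemma IRBd_eq_one_of_mem_MIF {B M : RuleBase A} (hM : M ∈ MIF B) : IRBd B = 1 :=
  if_neg (Set.nonempty_of_mem hM).ne_empty

end SelfRefutingPair

theorem stmt5 :
    ∃ (B : RuleBase ℕ) (r : Rule ℕ),
      r.body ≠ ∅ ∧ r ∉ B ∧ ¬ Free r (insert r B) ∧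
      ¬ (IRBd (insert r B) > IRBd (insert (factR r.head) B)) := by
  refine ⟨{factR (0, true), selfRefuting 0, factR (1, true)}, selfRefuting 1,
    by simp [selfRefuting], by decide, fun hfree => ?_, ?_⟩
  · exact hfree _ (pair_mem_MI (a := 1) (by simp) (by simp)) (by simp)
  · have hH : IRBd (insert (factR (selfRefuting 1).head)
        {factR (0, true), selfRefuting 0, factR (1, true)}) = 1 :=
      IRBd_eq_one_of_mem_MIF (pair_mem_MIF (a := 0) (by simp) (by simp))
    simpa [hH] using IRBd_le_one _
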